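/- Let (X,d,μ) be a metric measure space with doubling μ satisfying μ(B(c,r'))/μ(B(c,r)) ≲ (r'/r)^σ for some σ > 0, c ∈ X and all 0 < r' ≤ r ≤ 2 diam X. Let p > 1 and -σ < α < σ(p-1), and set w(x) = d(x,c)^α. Then w is an A_p weight with respect to μ: for every ball B ⊂ X, (⨍_B w dμ) (⨍_B w^{1/(1-p)} dμ)^{p-1} ≤ C, with C depending only on the comparison constant in the decay condition, α and σ. -/

import Mathlib

/-!
Put `β = α / (1 - p)`, so that `w ^ (1 / (1 - p)) = d(·, c) ^ β` and `β (p - 1) = -α`; both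
`α` and `β` exceed `-σ`. For `γ > -σ`, summing over the dyadic annuli around `c` and using the decay
condition gives `∫_{B(c,ρ)} d(x,c)^γ dμ ≲ ρ^γ μ(B(c,ρ))`. A ball `B(z,r)` with `d(z,c) < 2r` is
contained in a ball `B(c,ρ)` with `ρ ≤ 3r` of comparable measure (doubling), so the two averages
are `≲ ρ^α` and `≲ ρ^β`; on any other ball `d(·,c)` is within a factor `2` of `d(z,c)`. Either
way the `A_p` product is `≲ t^α (t^β)^(p-1) = 1`.
-/

open MeasureTheory Metric Set ENNReal

section Averages

variable {α : Type*} [MeasurableSpace α] {μ : Measure α} {s t : Set α}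

lemma setLIntegral_le_mul_measure {f : α → ℝ≥0∞} {M : ℝ≥0∞} (h : ∀ x ∈ s, f x ≤ M) :
    ∫⁻ x in s, f x ∂μ ≤ M * μ s :=
  (setLIntegral_mono measurable_const h).trans_eq (setLIntegral_const s M)

lemma setAverage_nonneg {f : α → ℝ} (hf : ∀ x, 0 ≤ f x) : 0 ≤ ⨍ x in s, f x ∂μ := by
  rw [setAverage_eq, smul_eq_mul]
  exact mul_nonneg (inv_nonneg.2 measureReal_nonneg) (integral_nonneg hf)

lemma setAverage_le_of_setLIntegral_le {f : α → ℝ} {M : ℝ} (hf : ∀ x, 0 ≤ f x) (hM : 0 ≤ M)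
    (h : ∫⁻ x in s, ENNReal.ofReal (f x) ∂μ ≤ ENNReal.ofReal M * μ s) :
    ⨍ x in s, f x ∂μ ≤ M := by
  rw [setAverage_eq, smul_eq_mul]
  -- if `μ s` is `0` or `∞`, the average is the junk value `0`
  rcases measureReal_nonneg.eq_or_lt with h0 | hpos
  · rw [← h0, _root_.inv_zero, zero_mul]
    exact hM
  have hfin : μ s ≠ ⊤ := (ENNReal.toReal_pos_iff.1 hpos).2.ne
  rw [inv_mul_le_iff₀ hpos]
  calc ∫ x in s, f x ∂μ ≤ ‖∫ x in s, f x ∂μ‖ := Real.le_norm_self _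
    _ ≤ (∫⁻ x in s, ENNReal.ofReal ‖f x‖ ∂μ).toReal := norm_integral_le_lintegral_norm _
    _ = (∫⁻ x in s, ENNReal.ofReal (f x) ∂μ).toReal := by
      simp only [Real.norm_of_nonneg (hf _)]
    _ ≤ (ENNReal.ofReal M * μ s).toReal := toReal_mono (mul_ne_top ofReal_ne_top hfin) h
    _ = μ.real s * M := by rw [toReal_mul, toReal_ofReal hM, mul_comm]; rfl

lemma setAverage_le_of_forall_le {f : α → ℝ} {M : ℝ} (hf : ∀ x, 0 ≤ f x) (hM : 0 ≤ M)
    (h : ∀ x ∈ s, f x ≤ M) : ⨍ x in s, f x ∂μ ≤ M :=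
  setAverage_le_of_setLIntegral_le hf hM
    (setLIntegral_le_mul_measure fun x hx => ofReal_le_ofReal (h x hx))

lemma setAverage_le_of_subset {f : α → ℝ} {M K : ℝ} (hf : ∀ x, 0 ≤ f x) (hM : 0 ≤ M)
    (hK : 0 ≤ K) (hst : s ⊆ t) (hμ : μ t ≤ ENNReal.ofReal K * μ s)
    (h : ∫⁻ x in t, ENNReal.ofReal (f x) ∂μ ≤ ENNReal.ofReal M * μ t) :
    ⨍ x in s, f x ∂μ ≤ M * K := by
  refine setAverage_le_of_setLIntegral_le hf (mul_nonneg hM hK) ?_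
  calc ∫⁻ x in s, ENNReal.ofReal (f x) ∂μ ≤ ∫⁻ x in t, ENNReal.ofReal (f x) ∂μ :=
        lintegral_mono' (Measure.restrict_mono hst le_rfl) le_rfl
    _ ≤ ENNReal.ofReal M * (ENNReal.ofReal K * μ s) := h.trans (by gcongr)
    _ = ENNReal.ofReal (M * K) * μ s := by rw [ofReal_mul hM, mul_assoc]

end Averages

section RealPowers

lemma rpow_le_two_rpow_abs_mul_rpow {t d γ : ℝ} (hd : 0 ≤ d) (h₁ : d / 2 ≤ t) (h₂ : t ≤ 2 * d) :
    t ^ γ ≤ 2 ^ |γ| * d ^ γ := by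
  rcases hd.eq_or_lt with rfl | hd
  · obtain rfl : t = 0 := by linarith
    exact le_mul_of_one_le_left (Real.rpow_nonneg le_rfl _)
      (Real.one_le_rpow one_le_two (abs_nonneg γ))
  rcases le_or_gt 0 γ with hγ | hγ
  · calc t ^ γ ≤ (2 * d) ^ γ := Real.rpow_le_rpow (by linarith) h₂ hγ
      _ = 2 ^ |γ| * d ^ γ := by rw [abs_of_nonneg hγ, Real.mul_rpow zero_le_two hd.le]
  · calc t ^ γ ≤ (d / 2) ^ γ := Real.rpow_le_rpow_of_nonpos (by linarith) h₁ hγ.le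
      _ = 2 ^ |γ| * d ^ γ := by
        rw [abs_of_neg hγ, Real.div_rpow hd.le zero_le_two, Real.rpow_neg zero_le_two]
        ring

lemma rpow_mul_rpow_neg_le_one {t : ℝ} (ht : 0 ≤ t) (α : ℝ) : t ^ α * t ^ (-α) ≤ 1 := by
  rcases ht.eq_or_lt with rfl | ht
  · rcases eq_or_ne α 0 with rfl | hα
    · simp
    · simp [Real.zero_rpow hα]
  · rw [Real.rpow_neg ht.le, mul_inv_cancel₀ (Real.rpow_pos_of_pos ht α).ne']

lemma mul_rpow_le_of_le_mul_rpow {a b A B t α β q : ℝ} (hb : 0 ≤ b) (hA : 0 ≤ A) (hB : 0 ≤ B)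
    (ht : 0 ≤ t) (hq : 0 ≤ q) (hβq : β * q = -α) (ha : a ≤ A * t ^ α) (hb' : b ≤ B * t ^ β) :
    a * b ^ q ≤ A * B ^ q := by
  have htα := Real.rpow_nonneg ht α
  have htβ := Real.rpow_nonneg ht β
  calc a * b ^ q ≤ A * t ^ α * (B * t ^ β) ^ q :=
        mul_le_mul ha (Real.rpow_le_rpow hb hb' hq) (Real.rpow_nonneg hb q) (mul_nonneg hA htα)
    _ = A * B ^ q * (t ^ α * t ^ (-α)) := by
        rw [Real.mul_rpow hB htβ, ← Real.rpow_mul ht, hβq]; ring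
    _ ≤ A * B ^ q := mul_le_of_le_one_right (mul_nonneg hA (Real.rpow_nonneg hB q))
        (rpow_mul_rpow_neg_le_one ht α)

lemma exists_pow_mul_le_lt {b t ρ : ℝ} (hb₀ : 0 < b) (hb₁ : b < 1) (ht : 0 < t) (htρ : t < ρ) :
    ∃ k : ℕ, b ^ (k + 1) * ρ ≤ t ∧ t < b ^ k * ρ := by
  have hex : ∃ n : ℕ, b ^ (n + 1) * ρ ≤ t := by
    obtain ⟨n, hn⟩ := exists_pow_lt_of_lt_one (div_pos ht (ht.trans htρ)) hb₁
    refine ⟨n, ?_⟩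
    rw [lt_div_iff₀ (ht.trans htρ)] at hn
    have : b ^ (n + 1) ≤ b ^ n := pow_le_pow_of_le_one hb₀.le hb₁.le (by omega)
    nlinarith [mul_le_mul_of_nonneg_right this (ht.trans htρ).le]
  rcases h : Nat.find hex with _ | k
  · exact ⟨0, h ▸ Nat.find_spec hex, by rwa [pow_zero, one_mul]⟩
  · refine ⟨k + 1, h ▸ Nat.find_spec hex, not_le.1 ?_⟩
    exact Nat.find_min hex (h ▸ k.lt_succ_self)

end RealPowers

section Balls

variable {X : Type*} [MetricSpace X]

lemma ball_subset_union_annuli {b ρ : ℝ} (hb₀ : 0 < b) (hb₁ : b < 1) (c : X) :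
    ball c ρ ⊆ {c} ∪ ⋃ k : ℕ, ball c (b ^ k * ρ) \ ball c (b ^ (k + 1) * ρ) := by
  intro x hx
  rcases eq_or_ne x c with rfl | hxc
  · exact Or.inl rfl
  obtain ⟨k, hk₁, hk₂⟩ := exists_pow_mul_le_lt hb₀ hb₁ (dist_pos.2 hxc) (mem_ball.1 hx)
  exact Or.inr (mem_iUnion.2 ⟨k, mem_ball.2 hk₂, fun h => (mem_ball.1 h).not_ge hk₁⟩)

lemma exists_radius_ball_subset_ball {z c : X} {r : ℝ} (hr : 0 < r) (hzc : dist z c < 2 * r)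
    (hdiam : ediam (univ : Set X) ≠ 0) :
    ∃ ρ, 0 < ρ ∧ ρ ≤ 3 * r ∧ ENNReal.ofReal ρ ≤ 2 * ediam (univ : Set X) ∧
      ball z r ⊆ ball c ρ := by
  by_cases hfit : ENNReal.ofReal (3 * r) ≤ 2 * ediam (univ : Set X)
  · refine ⟨3 * r, by positivity, le_rfl, hfit, fun x hx => ?_⟩
    rw [mem_ball] at hx ⊢
    linarith [dist_triangle x z c]
  -- otherwise `X` itself is a ball around `c` of radius `2 diam X < 3r`
  have hfin : ediam (univ : Set X) ≠ ⊤ := by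
    rintro h
    simp [h] at hfit
  have hD : 0 < diam (univ : Set X) := toReal_pos hdiam hfin
  have h2D : ENNReal.ofReal (2 * diam (univ : Set X)) = 2 * ediam (univ : Set X) := by
    rw [ofReal_mul zero_le_two, diam, ofReal_toReal hfin, ofReal_ofNat]
  refine ⟨2 * diam (univ : Set X), by positivity, ?_, h2D.le, fun x _ => ?_⟩
  · rw [← h2D, not_le, ofReal_lt_ofReal_iff (by positivity)] at hfit
    exact hfit.le
  · have := dist_le_diam_of_mem (isBounded_iff_ediam_ne_top.2 hfin) (mem_univ x) (mem_univ c)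
    rw [mem_ball]
    linarith

lemma dist_comparable_of_far {z c x : X} {r : ℝ}
    (h : 2 * r ≤ dist z c ∨ ediam (univ : Set X) = 0) (hx : x ∈ ball z r) :
    dist z c / 2 ≤ dist x c ∧ dist x c ≤ 2 * dist z c := by
  rw [mem_ball] at hx
  rcases h with h | h
  · constructor <;> linarith [dist_triangle z x c, dist_triangle x z c, dist_comm x z]
  · have hsub := ediam_eq_zero_iff.1 h
    rw [hsub (mem_univ x) (mem_univ c), hsub (mem_univ z) (mem_univ c), dist_self]
    norm_num

variable [MeasurableSpace X] {μ : Measure X}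

lemma setAverage_dist_rpow_le_of_far {z c : X} {r : ℝ}
    (h : 2 * r ≤ dist z c ∨ ediam (univ : Set X) = 0) (γ : ℝ) :
    ⨍ x in ball z r, dist x c ^ γ ∂μ ≤ 2 ^ |γ| * dist z c ^ γ :=
  setAverage_le_of_forall_le (fun _ => Real.rpow_nonneg dist_nonneg γ) (by positivity)
    fun _ hx => (dist_comparable_of_far h hx).elim (rpow_le_two_rpow_abs_mul_rpow dist_nonneg)

lemma measure_ball_two_pow_mul_le {CD : ℝ} (hCD : 0 ≤ CD) {x : X}
    (hdoub : ∀ r : ℝ, 0 < r → μ (ball x (2 * r)) ≤ ENNReal.ofReal CD * μ (ball x r))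
    {r : ℝ} (hr : 0 < r) (n : ℕ) :
    μ (ball x (2 ^ n * r)) ≤ ENNReal.ofReal (CD ^ n) * μ (ball x r) := by
  induction n with
  | zero => simp
  | succ n ih =>
    calc μ (ball x (2 ^ (n + 1) * r)) = μ (ball x (2 * (2 ^ n * r))) := by ring_nf
      _ ≤ ENNReal.ofReal CD * μ (ball x (2 ^ n * r)) := hdoub _ (by positivity)
      _ ≤ ENNReal.ofReal CD * (ENNReal.ofReal (CD ^ n) * μ (ball x r)) := by gcongr
      _ = ENNReal.ofReal (CD ^ (n + 1)) * μ (ball x r) := by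
        rw [pow_succ', ofReal_mul hCD, mul_assoc]

lemma exists_ball_center_comparable {CD : ℝ} (hCD : 0 ≤ CD) {z c : X}
    (hdoub : ∀ r : ℝ, 0 < r → μ (ball z (2 * r)) ≤ ENNReal.ofReal CD * μ (ball z r))
    {r : ℝ} (hr : 0 < r) (hzc : dist z c < 2 * r) (hdiam : ediam (univ : Set X) ≠ 0) :
    ∃ ρ, 0 < ρ ∧ ENNReal.ofReal ρ ≤ 2 * ediam (univ : Set X) ∧ ball z r ⊆ ball c ρ ∧
      μ (ball c ρ) ≤ ENNReal.ofReal (CD ^ 3) * μ (ball z r) := by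
  obtain ⟨ρ, hρ, hρr, hρD, hsub⟩ := exists_radius_ball_subset_ball hr hzc hdiam
  refine ⟨ρ, hρ, hρD, hsub, ?_⟩
  calc μ (ball c ρ) ≤ μ (ball z (2 ^ 3 * r)) := measure_mono fun x hx => by
        rw [mem_ball] at hx ⊢
        linarith [dist_triangle x c z, dist_comm z c]
    _ ≤ ENNReal.ofReal (CD ^ 3) * μ (ball z r) := measure_ball_two_pow_mul_le hCD hdoub hr 3

end Balls

section PowerWeight

variable {X : Type*} [MetricSpace X] [MeasurableSpace X]

def HasMeasureDecayAt (μ : Measure X) (c : X) (C σ : ℝ) : Prop :=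
  ∀ r' r : ℝ, 0 < r' → r' ≤ r → ENNReal.ofReal r ≤ 2 * ediam (univ : Set X) →
    μ (ball c r') ≤ ENNReal.ofReal (C * (r' / r) ^ σ) * μ (ball c r)

variable {μ : Measure X} {c : X} {C σ : ℝ}

lemma setLIntegral_dist_rpow_annulus_le
    (hdecay : HasMeasureDecayAt μ c C σ)
    {γ b ρ : ℝ} (hγ : γ ≤ 0) (hb₀ : 0 < b) (hb₁ : b ≤ 1) (hρ : 0 < ρ)
    (hρD : ENNReal.ofReal ρ ≤ 2 * ediam (univ : Set X)) (k : ℕ) :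
    ∫⁻ x in ball c (b ^ k * ρ) \ ball c (b ^ (k + 1) * ρ), ENNReal.ofReal (dist x c ^ γ) ∂μ
      ≤ ENNReal.ofReal (C * b ^ γ * ρ ^ γ * (b ^ σ * b ^ γ) ^ k) * μ (ball c ρ) := by
  have hbound : ∀ x ∈ ball c (b ^ k * ρ) \ ball c (b ^ (k + 1) * ρ),
      ENNReal.ofReal (dist x c ^ γ) ≤ ENNReal.ofReal ((b ^ (k + 1) * ρ) ^ γ) := fun x hx =>
    ofReal_le_ofReal (Real.rpow_le_rpow_of_nonpos (by positivity) (not_lt.1 hx.2) hγ)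
  have hdecay_k : μ (ball c (b ^ k * ρ)) ≤ ENNReal.ofReal (C * (b ^ k) ^ σ) * μ (ball c ρ) := by
    simpa only [mul_div_cancel_right₀ _ hρ.ne'] using
      hdecay _ ρ (by positivity) (mul_le_of_le_one_left hρ.le (pow_le_one₀ hb₀.le hb₁)) hρD
  have hscale : (b ^ (k + 1) * ρ) ^ γ * (C * (b ^ k) ^ σ)
      = C * b ^ γ * ρ ^ γ * (b ^ σ * b ^ γ) ^ k := by
    rw [Real.mul_rpow (by positivity) hρ.le, ← Real.rpow_pow_comm hb₀.le,
      ← Real.rpow_pow_comm hb₀.le]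
    ring
  calc _ ≤ ENNReal.ofReal ((b ^ (k + 1) * ρ) ^ γ) *
        μ (ball c (b ^ k * ρ) \ ball c (b ^ (k + 1) * ρ)) := setLIntegral_le_mul_measure hbound
    _ ≤ ENNReal.ofReal ((b ^ (k + 1) * ρ) ^ γ) *
        (ENNReal.ofReal (C * (b ^ k) ^ σ) * μ (ball c ρ)) := by
      gcongr
      exact (measure_mono sdiff_subset).trans hdecay_k
    _ = _ := by rw [← mul_assoc, ← ofReal_mul (by positivity), hscale]

lemma exists_setLIntegral_dist_rpow_ball_le
    (hdecay : HasMeasureDecayAt μ c C σ)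
    (hC : 0 < C) {γ : ℝ} (hγ : -σ < γ) :
    ∃ A : ℝ, 0 < A ∧ ∀ ρ : ℝ, 0 < ρ → ENNReal.ofReal ρ ≤ 2 * ediam (univ : Set X) →
      ∫⁻ x in ball c ρ, ENNReal.ofReal (dist x c ^ γ) ∂μ
        ≤ ENNReal.ofReal (A * ρ ^ γ) * μ (ball c ρ) := by
  rcases le_or_gt 0 γ with hγ₀ | hγ₀
  · refine ⟨1, one_pos, fun ρ _ _ => ?_⟩
    rw [one_mul]
    exact setLIntegral_le_mul_measure fun x hx =>
      ofReal_le_ofReal (Real.rpow_le_rpow dist_nonneg (mem_ball.1 hx).le hγ₀)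
  -- on dyadic annuli the decay of the measure beats the growth of the weight, as `σ + γ > 0`
  set b : ℝ := 2⁻¹
  have hq₁ : b ^ σ * b ^ γ < 1 := by
    rw [← Real.rpow_add (by norm_num)]
    exact Real.rpow_lt_one (by norm_num) (by norm_num) (by linarith)
  set q := b ^ σ * b ^ γ
  have hq₀ : 0 ≤ q := by positivity
  have hq : 0 < 1 - q := by linarith
  refine ⟨C * b ^ γ * (1 - q)⁻¹, by positivity, fun ρ hρ hρD => ?_⟩
  have hcenter : ∫⁻ x in ({c} : Set X), ENNReal.ofReal (dist x c ^ γ) ∂μ = 0 := by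
    refine le_antisymm ((setLIntegral_le_mul_measure (M := 0) ?_).trans_eq (zero_mul _)) zero_le
    rintro x rfl
    simp [Real.zero_rpow hγ₀.ne]
  calc ∫⁻ x in ball c ρ, ENNReal.ofReal (dist x c ^ γ) ∂μ
      ≤ ∫⁻ x in {c} ∪ ⋃ k : ℕ, ball c (b ^ k * ρ) \ ball c (b ^ (k + 1) * ρ),
          ENNReal.ofReal (dist x c ^ γ) ∂μ :=
        lintegral_mono' (Measure.restrict_mono
          (ball_subset_union_annuli (by norm_num) (by norm_num) c) le_rfl) le_rfl
    _ ≤ ∑' k : ℕ, ∫⁻ x in ball c (b ^ k * ρ) \ ball c (b ^ (k + 1) * ρ),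
          ENNReal.ofReal (dist x c ^ γ) ∂μ := by
        refine (lintegral_union_le _ _ _).trans ?_
        rw [hcenter, zero_add]
        exact lintegral_iUnion_le _ _
    _ ≤ ∑' k : ℕ, ENNReal.ofReal (C * b ^ γ * ρ ^ γ * q ^ k) * μ (ball c ρ) :=
        ENNReal.tsum_le_tsum fun k => setLIntegral_dist_rpow_annulus_le hdecay hγ₀.le
          (by norm_num) (by norm_num) hρ hρD k
    _ = ENNReal.ofReal (C * b ^ γ * (1 - q)⁻¹ * ρ ^ γ) * μ (ball c ρ) := by
        rw [ENNReal.tsum_mul_right, ← ofReal_tsum_of_nonneg (fun k => by positivity)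
          ((summable_geometric_of_lt_one hq₀ hq₁).mul_left _), tsum_mul_left,
          tsum_geometric_of_lt_one hq₀ hq₁]
        ring_nf

end PowerWeight

theorem power_weight_is_Ap {X : Type*} [MetricSpace X] [MeasurableSpace X]
    (μ : Measure X) (c : X)
    (CD : ℝ) (hCD : 0 < CD)
    (hdoub : ∀ (x : X) (r : ℝ), 0 < r →
      μ (Metric.ball x (2 * r)) ≤ ENNReal.ofReal CD * μ (Metric.ball x r))
    (C σ : ℝ) (hC : 0 < C)
    (hdecay : ∀ r' r : ℝ, 0 < r' → r' ≤ r →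
      ENNReal.ofReal r ≤ 2 * EMetric.diam (Set.univ : Set X) →
      μ (Metric.ball c r') ≤ ENNReal.ofReal (C * (r' / r) ^ σ) * μ (Metric.ball c r))
    (p α : ℝ) (hp : 1 < p) (hα1 : -σ < α) (hα2 : α < σ * (p - 1)) :
    ∃ C' : ℝ, 0 < C' ∧ ∀ (z : X) (r : ℝ), 0 < r →
      (⨍ x in Metric.ball z r, dist x c ^ α ∂μ) *
        (⨍ x in Metric.ball z r, (dist x c ^ α) ^ (1 / (1 - p)) ∂μ) ^ (p - 1) ≤ C' := by
  set β := α * (1 / (1 - p))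
  have hβ : β * (p - 1) = -α := by
    rw [show β = α / (1 - p) by ring, div_mul_eq_mul_div, div_eq_iff (by linarith)]
    ring
  have hβσ : -σ < β := by
    rw [show β = α / (1 - p) by ring, lt_div_iff_of_neg (by linarith)]
    linarith
  have hw : ∀ (γ : ℝ) x, 0 ≤ dist x c ^ γ := fun γ x => Real.rpow_nonneg dist_nonneg γ
  obtain ⟨A₁, hA₁, hint₁⟩ := exists_setLIntegral_dist_rpow_ball_le hdecay hC hα1
  obtain ⟨A₂, hA₂, hint₂⟩ := exists_setLIntegral_dist_rpow_ball_le hdecay hC hβσ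
  refine ⟨max (A₁ * CD ^ 3 * (A₂ * CD ^ 3) ^ (p - 1)) (2 ^ |α| * (2 ^ |β|) ^ (p - 1)),
    lt_max_of_lt_right (by positivity), fun z r hr => ?_⟩
  simp only [← Real.rpow_mul dist_nonneg]
  by_cases hfar : 2 * r ≤ dist z c ∨ ediam (univ : Set X) = 0
  · exact le_max_of_le_right (mul_rpow_le_of_le_mul_rpow (setAverage_nonneg (hw β))
      (by positivity) (by positivity) dist_nonneg (by linarith) hβ
      (setAverage_dist_rpow_le_of_far hfar α) (setAverage_dist_rpow_le_of_far hfar β))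
  · rw [not_or, not_le] at hfar
    obtain ⟨ρ, hρ, hρD, hsub, hμ⟩ :=
      exists_ball_center_comparable hCD.le (hdoub z) hr hfar.1 hfar.2
    have hcentral {γ A : ℝ} (hA : 0 < A)
        (hint : ∫⁻ x in ball c ρ, ENNReal.ofReal (dist x c ^ γ) ∂μ
          ≤ ENNReal.ofReal (A * ρ ^ γ) * μ (ball c ρ)) :
        ⨍ x in ball z r, dist x c ^ γ ∂μ ≤ A * CD ^ 3 * ρ ^ γ := by
      rw [mul_right_comm]
      exact setAverage_le_of_subset (hw γ) (by positivity) (by positivity) hsub hμ hint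
    exact le_max_of_le_left (mul_rpow_le_of_le_mul_rpow (setAverage_nonneg (hw β))
      (by positivity) (by positivity) hρ.le (by linarith) hβ
      (hcentral hA₁ (hint₁ ρ hρ hρD)) (hcentral hA₂ (hint₂ ρ hρ hρD)))
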